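/- For a metric cost c, the Cheapest Insertion Algorithm applied to a vertex set V produces a Hamiltonian cycle whose total cost is at most 2 · OPT, where OPT is the cost of a minimum-cost Hamiltonian cycle on V. -/

import Mathlib

/-!
A cheapest-insertion step costs at most `2 c(u, v)` for any `u` in the current tour and `v`
outside it: inserting `v` next to `u` costs that much by the triangle inequality. Fix a
Hamiltonian cycle `H`. Every step `m` has edges of `H` crossing the cut between the tour `T m`
and its complement, and Hall's theorem matches the `n` steps injectively to crossing edges:
for a set `M` of steps, the number of cuts of `M` missing a vertex takes `|M| + 1` distinct
values along `H`, so at least `|M| + 1` edges of `H` cross one of these cuts. As `H` has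
`n + 2` edges, one edge `e` is left over, and the initial two-node tour costs at most `2 c(e)`.
Summing up, the final tour costs at most `2 · cost H`.
-/

/-- Length of a cyclic tour given by a list. -/
def cycleLength {V : Type*} (c : V → V → ℝ) (l : List V) : ℝ :=
  ((l.zip (l.rotate 1)).map fun p => c p.1 p.2).sum

/-- A cheapest-insertion step: a node k not in the tour is inserted at some position, and
the resulting tour is no longer than any tour obtained by inserting any node not in the
tour at any position. -/
def IsCheapestInsertionStep {V : Type*} (c : V → V → ℝ) (l l' : List V) : Prop :=
  ∃ (k : V) (pos : ℕ), k ∉ l ∧ pos ≤ l.length ∧ l' = l.insertIdx pos k ∧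
    ∀ (k' : V) (pos' : ℕ), k' ∉ l → pos' ≤ l.length →
      cycleLength c l' ≤ cycleLength c (l.insertIdx pos' k')

open Finset

theorem add_sum_comp_le_sum {ι κ α : Type*} [Fintype ι] [Fintype κ] [AddCommMonoid α]
    [PartialOrder α] [IsOrderedAddMonoid α] {w : κ → α} (hw : ∀ k, 0 ≤ w k) {φ : ι → κ}
    (hφ : Function.Injective φ) {e : κ} (he : e ∉ Set.range φ) :
    w e + ∑ i, w (φ i) ≤ ∑ k, w k := by
  have he' : e ∉ univ.map ⟨φ, hφ⟩ := by simpa using he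
  calc w e + ∑ i, w (φ i) = ∑ k ∈ cons e (univ.map ⟨φ, hφ⟩) he', w k := by
        rw [sum_cons, sum_map]; rfl
    _ ≤ ∑ k, w k := sum_le_univ_sum_of_nonneg hw

theorem le_add_sum_of_le_add {α : Type*} [AddCommMonoid α] [PartialOrder α]
    [IsOrderedAddMonoid α] {f : ℕ → α} {n : ℕ} {d : Fin n → α}
    (h : ∀ m : Fin n, f (m + 1) ≤ f m + d m) :
    f n ≤ f 0 + ∑ m, d m := by
  induction n with
  | zero => simp
  | succ n ih =>
    rw [Fin.sum_univ_castSucc, ← add_assoc]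
    calc f (n + 1) ≤ f n + d (Fin.last n) := h (Fin.last n)
      _ ≤ _ := add_le_add_left (ih fun m => h m.castSucc) _

theorem List.insertIdx_length_append {α : Type*} (l l' : List α) (a : α) :
    (l ++ l').insertIdx l.length a = l ++ a :: l' := by
  induction l with
  | nil => simp
  | cons x l ih => simp [List.insertIdx_succ_cons, ih]

section CycleLength

variable {V : Type*} {c : V → V → ℝ}

theorem cycleLength_eq_sum_zipWith (l : List V) :
    cycleLength c l = (List.zipWith c l (l.rotate 1)).sum := by
  rw [cycleLength, List.map_zip_eq_zipWith]
  rfl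

theorem cycleLength_rotate (l : List V) (k : ℕ) :
    cycleLength c (l.rotate k) = cycleLength c l := by
  rw [cycleLength_eq_sum_zipWith, cycleLength_eq_sum_zipWith, List.rotate_rotate, Nat.add_comm,
    ← List.rotate_rotate, ← List.zipWith_rotate_distrib _ _ _ _ (by simp)]
  exact ((List.zipWith c l (l.rotate 1)).rotate_perm k).sum_eq

theorem cycleLength_append_comm (l l' : List V) :
    cycleLength c (l ++ l') = cycleLength c (l' ++ l) := by
  rw [← List.rotate_append_length_eq, cycleLength_rotate]

theorem cycleLength_pair (a b : V) : cycleLength c [a, b] = c a b + c b a := by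
  simp [cycleLength]

theorem cycleLength_cons_cons (x y : V) (l : List V) :
    cycleLength c (x :: y :: l) + c ((y :: l).getLast (List.cons_ne_nil y l)) y =
      cycleLength c (y :: l) + c x y + c ((y :: l).getLast (List.cons_ne_nil y l)) x := by
  have hsplit := List.dropLast_append_getLast (List.cons_ne_nil y l)
  have hlen : (y :: l).dropLast.length = l.length := by simp
  have key (z : V) : (List.zipWith c (y :: l) (l ++ [z])).sum =
      (List.zipWith c (y :: l).dropLast l).sum + c ((y :: l).getLast (List.cons_ne_nil y l)) z := by
    conv_lhs => rw [← hsplit]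
    rw [List.zipWith_append hlen]
    simp
  simp only [cycleLength_eq_sum_zipWith, List.rotate_cons_succ, List.rotate_zero,
    List.cons_append, List.zipWith_cons_cons, List.sum_cons, key]
  ring

theorem cycleLength_eq_sum_finRotate (l : List V) :
    cycleLength c l = ∑ i : Fin l.length, c l[i] l[finRotate l.length i] := by
  rw [cycleLength_eq_sum_zipWith, ← List.sum_ofFn]
  congr 1
  refine List.ext_getElem (by simp) fun i h₁ h₂ => ?_
  simp only [List.getElem_zipWith, List.getElem_ofFn, List.getElem_rotate]
  congr 2
  rw [finRotate_apply, Fin.val_add, Fin.val_one', Nat.add_mod_mod]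

theorem exists_insertIdx_cycleLength_le (hsymm : ∀ a b, c a b = c b a)
    (htri : ∀ a b d, c a d ≤ c a b + c b d) {l : List V} {u : V} (hu : u ∈ l) (v : V) :
    ∃ pos ≤ l.length, cycleLength c (l.insertIdx pos v) ≤ cycleLength c l + 2 * c u v := by
  obtain ⟨s, t, rfl⟩ := List.append_of_mem hu
  refine ⟨s.length, by simp, ?_⟩
  rw [List.insertIdx_length_append, cycleLength_append_comm, cycleLength_append_comm s]
  simp only [List.cons_append]
  have hcons := cycleLength_cons_cons (c := c) v u (t ++ s)
  have := htri ((u :: (t ++ s)).getLast (List.cons_ne_nil _ _)) u v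
  rw [hsymm v u] at hcons
  linarith

namespace IsCheapestInsertionStep

variable {l l' : List V}

theorem length_eq (h : IsCheapestInsertionStep c l l') : l'.length = l.length + 1 := by
  obtain ⟨k, pos, -, hpos, rfl, -⟩ := h
  exact List.length_insertIdx_of_le_length hpos k

theorem subset (h : IsCheapestInsertionStep c l l') : l ⊆ l' := by
  obtain ⟨k, pos, -, hpos, rfl, -⟩ := h
  exact fun v hv => List.mem_insertIdx hpos |>.mpr (Or.inr hv)

theorem exists_mem_notMem (h : IsCheapestInsertionStep c l l') : ∃ k, k ∉ l ∧ k ∈ l' := by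
  obtain ⟨k, pos, hk, hpos, rfl, -⟩ := h
  exact ⟨k, hk, List.mem_insertIdx hpos |>.mpr (Or.inl rfl)⟩

theorem cycleLength_le (h : IsCheapestInsertionStep c l l') (hsymm : ∀ a b, c a b = c b a)
    (htri : ∀ a b d, c a d ≤ c a b + c b d) {u v : V} (hu : u ∈ l) (hv : v ∉ l) :
    cycleLength c l' ≤ cycleLength c l + 2 * c u v := by
  obtain ⟨-, -, -, -, -, hmin⟩ := h
  obtain ⟨pos, hpos, hle⟩ := exists_insertIdx_cycleLength_le hsymm htri hu v
  exact (hmin v pos hv hpos).trans hle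

theorem cycleLength_le_of_cut (h : IsCheapestInsertionStep c l l')
    (hsymm : ∀ a b, c a b = c b a) (htri : ∀ a b d, c a d ≤ c a b + c b d) {a b : V}
    (hab : ¬(a ∈ l ↔ b ∈ l)) : cycleLength c l' ≤ cycleLength c l + 2 * c a b := by
  by_cases ha : a ∈ l
  · exact h.cycleLength_le hsymm htri ha fun hb => hab (iff_of_true ha hb)
  · rw [hsymm]
    exact h.cycleLength_le hsymm htri (not_not.mp fun hb => hab (iff_of_false ha hb)) ha

end IsCheapestInsertionStep

end CycleLength

section CycleCut

variable {N : ℕ}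

theorem finRotate_apply_ne_self (hN : 2 ≤ N) (i : Fin N) : finRotate N i ≠ i :=
  Equiv.Perm.mem_support.mp (by rw [support_finRotate_of_le hN]; exact mem_univ i)

def cutEdges (A : Finset (Fin N)) : Finset (Fin N) :=
  {i | ¬(i ∈ A ↔ finRotate N i ∈ A)}

theorem exists_apply_eq_and_apply_finRotate_ne {α : Type*} {f : Fin N → α}
    (hf : ∃ a b, f a ≠ f b) (p : Fin N) : ∃ q, f q = f p ∧ f (finRotate N q) ≠ f p := by
  by_contra! hq
  obtain ⟨a, b, hab⟩ := hf
  have hN : 2 ≤ N := by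
    have := Fin.val_ne_of_ne (ne_of_apply_ne f hab)
    omega
  have hpow (k : ℕ) : f ((finRotate N ^ k) p) = f p := by
    induction k with
    | zero => rfl
    | succ k ih => rw [pow_succ', Equiv.Perm.mul_apply]; exact hq _ ih
  have hconst (y : Fin N) : f y = f p := by
    obtain ⟨k, rfl⟩ := (isCycle_finRotate_of_le hN).exists_pow_eq (finRotate_apply_ne_self hN p)
      (finRotate_apply_ne_self hN y)
    exact hpow k
  exact hab ((hconst a).trans (hconst b).symm)

theorem card_image_le_card_filter_apply_finRotate_ne {α : Type*} [DecidableEq α] {f : Fin N → α}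
    (hf : ∃ a b, f a ≠ f b) : #(univ.image f) ≤ #{i | f i ≠ f (finRotate N i)} := by
  calc #(univ.image f)
      ≤ #(({i | f i ≠ f (finRotate N i)} : Finset (Fin N)).image f) := by
        refine card_le_card fun v hv => ?_
        obtain ⟨p, -, rfl⟩ := mem_image.mp hv
        obtain ⟨q, hqp, hq⟩ := exists_apply_eq_and_apply_finRotate_ne hf p
        exact mem_image.mpr ⟨q, mem_filter.mpr ⟨mem_univ q, by rw [hqp]; exact hq.symm⟩, hqp⟩
    _ ≤ _ := card_image_le

theorem filter_card_ne_subset_biUnion_cutEdges {ι : Type*} [DecidableEq ι]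
    (A : ι → Finset (Fin N)) (M : Finset ι) :
    ({i | #{m ∈ M | i ∉ A m} ≠ #{m ∈ M | finRotate N i ∉ A m}} : Finset (Fin N)) ⊆
      M.biUnion fun m => cutEdges (A m) := by
  intro i hi
  by_contra hni
  have hcut (m : ι) (hm : m ∈ M) : (i ∈ A m ↔ finRotate N i ∈ A m) := by
    by_contra h
    exact hni (mem_biUnion.mpr ⟨m, hm, mem_filter.mpr ⟨mem_univ i, h⟩⟩)
  exact (mem_filter.mp hi).2 (congrArg card (filter_congr fun m hm => not_congr (hcut m hm)))

theorem card_le_card_biUnion_cutEdges {ι : Type*} [LinearOrder ι] {A : ι → Finset (Fin N)}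
    (hA : Monotone A) {p : Fin N} (hp : ∀ m, p ∈ A m) {x : ι → Fin N} (hx : ∀ m, x m ∉ A m)
    (hx' : ∀ m m', m < m' → x m ∈ A m') (M : Finset ι) :
    #M ≤ #(M.biUnion fun m => cutEdges (A m)) := by
  classical
  rcases M.eq_empty_or_nonempty with rfl | ⟨m₀, hm₀⟩
  · simp
  -- `g` takes the `#M + 1` distinct values `g p = 0 < g (x m)`, `m ∈ M`.
  set g : Fin N → ℕ := fun i => #{m ∈ M | i ∉ A m}
  have hgp : g p = 0 := by simp [g, hp]
  have hgx_pos (m : ι) (hm : m ∈ M) : 0 < g (x m) := card_pos.mpr ⟨m, by simp [hm, hx]⟩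
  have hgx_mono : StrictMonoOn (g ∘ x) M := by
    intro m hm m' hm' hlt
    refine card_lt_card <| (ssubset_iff_of_subset fun m'' hm'' => ?_).mpr
      ⟨m', mem_filter.mpr ⟨hm', hx m'⟩, fun h => (mem_filter.mp h).2 (hx' m m' hlt)⟩
    obtain ⟨hm''M, hxm⟩ := mem_filter.mp hm''
    have hle : m'' ≤ m' := (not_lt.mp fun h => hxm (hx' m m'' h)).trans hlt.le
    exact mem_filter.mpr ⟨hm''M, fun h => hx m' (hA hle h)⟩
  have hvalues : #M + 1 ≤ #(univ.image g) := by
    have hgp_notMem : g p ∉ M.image (g ∘ x) := fun h => by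
      obtain ⟨m, hm, hm0⟩ := mem_image.mp h
      exact (hgx_pos m hm).ne' (hm0.trans hgp)
    calc #M + 1 = #(insert (g p) (M.image (g ∘ x))) := by
          rw [card_insert_of_notMem hgp_notMem, card_image_of_injOn hgx_mono.injOn]
      _ ≤ #(univ.image g) := by
          refine card_le_card (insert_subset (mem_image_of_mem g (mem_univ p)) fun v hv => ?_)
          obtain ⟨m, -, rfl⟩ := mem_image.mp hv
          exact mem_image_of_mem g (mem_univ _)
  have hnc : ∃ a b, g a ≠ g b := ⟨p, x m₀, by rw [hgp]; exact (hgx_pos m₀ hm₀).ne⟩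
  calc #M ≤ #(univ.image g) := by omega
    _ ≤ _ := card_image_le_card_filter_apply_finRotate_ne hnc
    _ ≤ _ := card_le_card (filter_card_ne_subset_biUnion_cutEdges A M)

end CycleCut

def IsCheapestInsertionRun {V : Type*} (c : V → V → ℝ) (T : ℕ → List V) (n : ℕ) : Prop :=
  ∀ m < n, IsCheapestInsertionStep c (T m) (T (m + 1))

namespace IsCheapestInsertionRun

variable {V : Type*} {c : V → V → ℝ} {T : ℕ → List V} {n : ℕ}

theorem length_eq (hstep : IsCheapestInsertionRun c T n) :
    ∀ m ≤ n, (T m).length = (T 0).length + m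
  | 0, _ => rfl
  | m + 1, hm => by rw [(hstep m hm).length_eq, hstep.length_eq m (by omega), add_assoc]

theorem subset (hstep : IsCheapestInsertionRun c T n) {m m' : ℕ} (hmm' : m ≤ m')
    (hm' : m' ≤ n) : T m ⊆ T m' := by
  induction m', hmm' using Nat.le_induction with
  | base => exact List.Subset.refl _
  | succ k _ ih => exact List.Subset.trans (ih (by omega)) (hstep k (by omega)).subset

theorem exists_injective_crossingEdge (hstep : IsCheapestInsertionRun c T n) {l : List V}
    (hsub : T n ⊆ l) {v₀ : V} (hv₀ : v₀ ∈ T 0) :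
    ∃ φ : Fin n → Fin l.length, Function.Injective φ ∧
      ∀ m : Fin n, ¬(l[φ m] ∈ T m ↔ l[finRotate _ (φ m)] ∈ T m) := by
  classical
  have hpos (v : V) (hv : v ∈ T n) : ∃ a : Fin l.length, l[(a : ℕ)] = v :=
    List.mem_iff_get.mp (hsub hv)
  choose k hk hk' using fun m : Fin n => (hstep m m.2).exists_mem_notMem
  obtain ⟨p, hp⟩ := hpos v₀ (hstep.subset (Nat.zero_le n) le_rfl hv₀)
  choose x hx using fun m : Fin n => hpos (k m) (hstep.subset m.2 le_rfl (hk' m))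
  set A : Fin n → Finset (Fin l.length) := fun m => {a | l[a] ∈ T m}
  have hA : Monotone A := fun m m' hmm' a ha => by
    simp only [A, mem_filter, mem_univ, true_and] at ha ⊢
    exact hstep.subset hmm' m'.2.le ha
  have hall := card_le_card_biUnion_cutEdges hA (p := p) (x := x)
    (fun m => by simpa [A, hp] using hstep.subset (Nat.zero_le m) m.2.le hv₀)
    (fun m => by simpa [A, hx] using hk m)
    (fun m m' hmm' => by simpa [A, hx] using hstep.subset hmm' m'.2.le (hk' m))
  obtain ⟨φ, hφ, hφA⟩ := (all_card_le_biUnion_card_iff_exists_injective _).mp hall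
  exact ⟨φ, hφ, fun m => by simpa [A, cutEdges] using hφA m⟩

theorem cycleLength_le_two_mul (hstep : IsCheapestInsertionRun c T n)
    (hnonneg : ∀ a b, 0 ≤ c a b) (hsymm : ∀ a b, c a b = c b a)
    (htri : ∀ a b d, c a d ≤ c a b + c b d) {i j : V} (hT0 : T 0 = [i, j])
    (hmin : ∀ i' j', i' ≠ j' → c i j + c j i ≤ c i' j' + c j' i') (hnd : (T n).Nodup)
    {l : List V} (hl : l.Nodup) (hsub : T n ⊆ l) :
    cycleLength c (T n) ≤ 2 * cycleLength c l := by
  obtain ⟨φ, hφ, hcut⟩ := hstep.exists_injective_crossingEdge hsub (v₀ := i) (by simp [hT0])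
  have hlen : n + 2 ≤ l.length := by
    simpa [hstep.length_eq n le_rfl, hT0, add_comm] using (hnd.subperm hsub).length_le
  obtain ⟨e, he⟩ : ∃ e, e ∉ Set.range φ := by
    by_contra! h
    have := Fintype.card_le_of_surjective φ h
    simp only [Fintype.card_fin] at this
    omega
  set d : Fin l.length → ℝ := fun a => 2 * c l[a] l[finRotate _ a]
  have hstep_le (m : Fin n) : cycleLength c (T (m + 1)) ≤ cycleLength c (T m) + d (φ m) :=
    (hstep m m.2).cycleLength_le_of_cut hsymm htri (hcut m)
  have hbase : cycleLength c (T 0) ≤ d e := by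
    have hne : l[e] ≠ l[finRotate _ e] := fun h =>
      finRotate_apply_ne_self (by omega) e (Fin.ext (hl.getElem_inj_iff.mp h).symm)
    have := hmin _ _ hne
    rw [hsymm l[finRotate _ e]] at this
    rw [hT0, cycleLength_pair]
    linarith
  calc cycleLength c (T n)
      ≤ cycleLength c (T 0) + ∑ m, d (φ m) :=
        le_add_sum_of_le_add (f := fun m => cycleLength c (T m)) hstep_le
    _ ≤ d e + ∑ m, d (φ m) := by gcongr
    _ ≤ ∑ a, d a :=
        add_sum_comp_le_sum (w := d) (fun a => mul_nonneg zero_le_two (hnonneg _ _)) hφ he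
    _ = 2 * cycleLength c l := by rw [cycleLength_eq_sum_finRotate, mul_sum]

end IsCheapestInsertionRun

theorem stmt_9_general {V : Type*} (c : V → V → ℝ)
    (hnonneg : ∀ a b : V, 0 ≤ c a b)
    (hsymm : ∀ a b : V, c a b = c b a)
    (htri : ∀ a b d : V, c a d ≤ c a b + c b d)
    (T : ℕ → List V) (n : ℕ)
    (hinit : ∃ i j : V, i ≠ j ∧ T 0 = [i, j] ∧
      ∀ i' j' : V, i' ≠ j' → c i j + c j i ≤ c i' j' + c j' i')
    (hstep : ∀ m < n, IsCheapestInsertionStep c (T m) (T (m + 1)))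
    (hfin : (T n).Nodup ∧ ∀ v : V, v ∈ T n) :
    cycleLength c (T n) ≤
      2 * sInf {x : ℝ | ∃ l : List V, l.Nodup ∧ (∀ v : V, v ∈ l) ∧ x = cycleLength c l} := by
  obtain ⟨i, j, -, hT0, hmin⟩ := hinit
  have hopt : cycleLength c (T n) / 2 ≤
      sInf {x : ℝ | ∃ l : List V, l.Nodup ∧ (∀ v : V, v ∈ l) ∧ x = cycleLength c l} := by
    refine le_csInf ⟨_, T n, hfin.1, hfin.2, rfl⟩ ?_
    rintro _ ⟨l, hl, hall, rfl⟩
    have := IsCheapestInsertionRun.cycleLength_le_two_mul hstep hnonneg hsymm htri hT0 hmin hfin.1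
      hl fun v _ => hall v
    linarith
  linarith

/-- 2-approximation guarantee for the Cheapest Insertion Algorithm: for a metric cost c,
starting from a minimum two-node tour and performing cheapest-insertion steps until the
tour is Hamiltonian, the final tour costs at most twice the optimal Hamiltonian cycle. -/
theorem stmt_9 {V : Type*} [Fintype V] [DecidableEq V] (c : V → V → ℝ)
    (hnonneg : ∀ a b : V, 0 ≤ c a b)
    (hsymm : ∀ a b : V, c a b = c b a)
    (htri : ∀ a b d : V, c a d ≤ c a b + c b d)
    (hself : ∀ a : V, c a a = 0)
    (hcard : 3 ≤ Fintype.card V)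
    (T : ℕ → List V) (n : ℕ)
    (hinit : ∃ i j : V, i ≠ j ∧ T 0 = [i, j] ∧
      ∀ i' j' : V, i' ≠ j' → c i j + c j i ≤ c i' j' + c j' i')
    (hstep : ∀ m < n, IsCheapestInsertionStep c (T m) (T (m + 1)))
    (hfin : (T n).Nodup ∧ ∀ v : V, v ∈ T n) :
    cycleLength c (T n) ≤
      2 * sInf {x : ℝ | ∃ l : List V, l.Nodup ∧ (∀ v : V, v ∈ l) ∧ x = cycleLength c l} :=
  stmt_9_general c hnonneg hsymm htri T n hinit hstep hfin
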